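/- arXiv:1809.01049 — 2 statements merged into one kernel-verified Lean document; each statement's English description precedes it below -/
import Mathlib

section
/- For the Brezis–Nirenberg bump function on a cube S ⊂ R^n, there is a modulus of continuity θ (independent of S and μ) such that the modulus of mean oscillation satisfies ω_S(ψ^μ_S, t) ≤ (1/μ)·θ(2^μ t / ℓ(S)) for all t > 0. In particular ‖ψ^μ_S‖_{BMO(S)} ≤ C/μ. -/
open MeasureTheory

/-- Distance between two sets: `inf { dist x y : x ∈ A, y ∈ B }`. -/
noncomputable def setDist {α : Type*} [PseudoMetricSpace α] (A B : Set α) : ℝ :=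
  sInf (Set.image2 dist A B)

/-- The axis-parallel cube with lower corner `a` and side length `ℓ`. -/
def cube {n : ℕ} (a : EuclideanSpace ℝ (Fin n)) (ℓ : ℝ) : Set (EuclideanSpace ℝ (Fin n)) :=
  {x | ∀ i, a i ≤ x i ∧ x i ≤ a i + ℓ}

/-- The Brezis–Nirenberg bump function `ψ^μ_S` on the cube `S = cube a ℓ`:
`ψ^μ_S(x) = (1 − (1/μ) log₂(ℓ(S)/(4 d(x,∂S))))₊` when `d(x,∂S) < ℓ(S)/4`, and `1`
otherwise (the value for `d = 0` being interpreted as `0`). -/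
noncomputable def bumpS {n : ℕ} (a : EuclideanSpace ℝ (Fin n)) (ℓ : ℝ) (μ : ℕ)
    (x : EuclideanSpace ℝ (Fin n)) : ℝ :=
  if Metric.infDist x (frontier (cube a ℓ)) < ℓ / 4 then
    (if Metric.infDist x (frontier (cube a ℓ)) = 0 then 0
     else max 0 (1 - (1 / (μ : ℝ)) *
        Real.logb 2 (ℓ / (4 * Metric.infDist x (frontier (cube a ℓ))))))
  else 1

/-- The double-average oscillation of `f` on a cube `Q`. -/
noncomputable def oscQ {n : ℕ} (f : EuclideanSpace ℝ (Fin n) → ℝ)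
    (Q : Set (EuclideanSpace ℝ (Fin n))) : ℝ :=
  ((volume Q).toReal ^ 2)⁻¹ * ∫ x in Q, ∫ y in Q, |f x - f y|

/-- The modulus of mean oscillation of `f` on `S`: the supremum of the double-average
oscillation over interior cubes `Q ⊆ S` (i.e. `diam Q ≤ d(Q, ∂S)`) of side length `< t`. -/
noncomputable def omegaMod {n : ℕ} (f : EuclideanSpace ℝ (Fin n) → ℝ)
    (S : Set (EuclideanSpace ℝ (Fin n))) (t : ℝ) : ℝ :=
  sSup {r : ℝ | ∃ (b : EuclideanSpace ℝ (Fin n)) (ℓQ : ℝ), 0 < ℓQ ∧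
    cube b ℓQ ⊆ S ∧ Metric.diam (cube b ℓQ) ≤ setDist (cube b ℓQ) (frontier S) ∧
    ℓQ < t ∧ r = oscQ f (cube b ℓQ)}

/-- A modulus of continuity: bounded, nonnegative, nondecreasing on `[0,∞)`, vanishing
continuously at `0`. -/
def IsModulus (θ : ℝ → ℝ) : Prop :=
  (∀ t, 0 ≤ t → 0 ≤ θ t) ∧ MonotoneOn θ (Set.Ici 0) ∧ BddAbove (θ '' Set.Ici 0) ∧
    θ 0 = 0 ∧ ContinuousWithinAt θ (Set.Ici 0) 0

/-!
Write `d(x)` for the distance from `x` to `∂S` and `ρ(x) = 2^(μ+2) d(x)/ℓ(S)`. Then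
`ψ^μ_S = min 1 (log₂ (max 1 ρ) / μ)`. This profile moves by at most `1/μ` when `ρ` changes by a
factor of at most `2`, and by at most `|Δρ|/(μ log 2)` in general, since `log` is `1`-Lipschitz on
`[1, ∞)`. For two points of an interior cube `Q`, the distances to `∂S` differ by at most
`diam Q ≤ d(Q, ∂S)`, so they are within a factor `2` of each other, and by at most `√n ℓ(Q)`.
Hence every oscillation over `Q` is at most `(1/μ) min 1 (4√n/log 2 · 2^μ ℓ(Q)/ℓ(S))`.
-/

open Metric

lemma abs_log_sub_log_le_of_one_le {a b : ℝ} (ha : 1 ≤ a) (hb : 1 ≤ b) :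
    |Real.log a - Real.log b| ≤ |a - b| := by
  have key : ∀ u v : ℝ, 1 ≤ u → 1 ≤ v → Real.log u - Real.log v ≤ |u - v| := by
    intro u v hu hv
    calc Real.log u - Real.log v = Real.log (u / v) :=
          (Real.log_div (by positivity) (by positivity)).symm
      _ ≤ u / v - 1 := Real.log_le_sub_one_of_pos (by positivity)
      _ = (u - v) / v := by field_simp
      _ ≤ |u - v| / v := by gcongr; exact le_abs_self _
      _ ≤ |u - v| := div_le_self (abs_nonneg _) hv
  rw [abs_le]
  constructor
  · linarith [key b a hb ha, abs_sub_comm a b]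
  · exact key a b ha hb

lemma log_sub_log_le_log_two {a b : ℝ} (ha : 0 < a) (hab : a ≤ 2 * b) :
    Real.log a - Real.log b ≤ Real.log 2 := by
  have hb : 0 < b := by linarith
  have := Real.log_le_log ha hab
  rw [Real.log_mul two_ne_zero hb.ne'] at this
  linarith

lemma max_one_le_two_mul_max_one {u v : ℝ} (h : u ≤ 2 * v) : max 1 u ≤ 2 * max 1 v := by
  rw [mul_max_of_nonneg _ _ zero_le_two]
  exact max_le_max (by norm_num) h

noncomputable def bumpProfile (μ : ℕ) (r : ℝ) : ℝ :=
  min 1 (Real.logb 2 (max 1 r) / μ)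

lemma abs_bumpProfile_sub_le (μ : ℕ) {r s : ℝ} (hrs : r ≤ 2 * s) (hsr : s ≤ 2 * r) :
    |bumpProfile μ r - bumpProfile μ s| ≤ 1 / μ * min 1 (|r - s| / Real.log 2) := by
  have hlog2 : 0 < Real.log 2 := Real.log_pos one_lt_two
  have hr : 1 ≤ max 1 r := le_max_left 1 r
  have hs : 1 ≤ max 1 s := le_max_left 1 s
  have hratio : |Real.log (max 1 r) - Real.log (max 1 s)| ≤ Real.log 2 := abs_le.2
    ⟨by linarith [log_sub_log_le_log_two (by positivity) (max_one_le_two_mul_max_one hsr)],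
      log_sub_log_le_log_two (by positivity) (max_one_le_two_mul_max_one hrs)⟩
  have hlip : |Real.log (max 1 r) - Real.log (max 1 s)| ≤ |r - s| := by
    refine (abs_log_sub_log_le_of_one_le hr hs).trans ?_
    rw [max_comm 1 r, max_comm 1 s]
    exact abs_max_sub_max_le_abs r s 1
  have hmin := abs_min_sub_min_le_max 1 (Real.logb 2 (max 1 r) / μ) 1 (Real.logb 2 (max 1 s) / μ)
  calc |bumpProfile μ r - bumpProfile μ s|
      ≤ |Real.logb 2 (max 1 r) / μ - Real.logb 2 (max 1 s) / μ| :=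
        hmin.trans (max_le (by simp) le_rfl)
    _ = 1 / μ * (|Real.log (max 1 r) - Real.log (max 1 s)| / Real.log 2) := by
        rw [Real.logb, Real.logb, ← sub_div, ← sub_div, abs_div, abs_div, Nat.abs_cast,
          abs_of_pos hlog2]
        ring
    _ ≤ 1 / μ * min 1 (|r - s| / Real.log 2) := by
        gcongr
        exact le_min ((div_le_one hlog2).2 hratio) (by gcongr)

lemma logb_two_pow_mul_div_eq_sub_logb {ℓ d : ℝ} (hℓ : 0 < ℓ) (hd : 0 < d) (μ : ℕ) :
    Real.logb 2 (2 ^ (μ + 2) * d / ℓ) = μ - Real.logb 2 (ℓ / (4 * d)) := by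
  have : 2 ^ (μ + 2) * d / ℓ = 2 ^ μ / (ℓ / (4 * d)) := by field_simp; ring
  rw [this, Real.logb_div (by positivity) (by positivity), Real.logb_pow,
    Real.logb_self_eq_one one_lt_two, mul_one]

lemma bumpS_eq_bumpProfile {n : ℕ} (a : EuclideanSpace ℝ (Fin n)) {ℓ : ℝ} (hℓ : 0 < ℓ) {μ : ℕ}
    (hμ : 1 ≤ μ) (x : EuclideanSpace ℝ (Fin n)) :
    bumpS a ℓ μ x = bumpProfile μ (2 ^ (μ + 2) * infDist x (frontier (cube a ℓ)) / ℓ) := by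
  have hμ' : (0 : ℝ) < μ := by exact_mod_cast hμ
  unfold bumpS bumpProfile
  set d := infDist x (frontier (cube a ℓ))
  set ρ : ℝ := 2 ^ (μ + 2) * d / ℓ
  have hd : 0 ≤ d := infDist_nonneg
  have hρ : ρ < 2 ^ μ ↔ d < ℓ / 4 := by
    rw [div_lt_iff₀ hℓ, pow_add, lt_div_iff₀ four_pos]
    constructor <;> intro h <;> nlinarith [pow_pos (two_pos (α := ℝ)) μ]
  split_ifs with hnear hzero
  · simp [ρ, hzero]
  · have hpos : 0 < d := lt_of_le_of_ne hd (Ne.symm hzero)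
    have hL : 1 - 1 / μ * Real.logb 2 (ℓ / (4 * d)) = Real.logb 2 ρ / μ := by
      rw [logb_two_pow_mul_div_eq_sub_logb hℓ hpos]; field_simp
    rw [hL]
    rcases le_or_gt ρ 1 with hρ1 | hρ1
    · rw [max_eq_left hρ1, Real.logb_one, zero_div, min_eq_right zero_le_one, max_eq_left]
      exact div_nonpos_of_nonpos_of_nonneg
        (Real.logb_nonpos one_lt_two (by positivity) hρ1) hμ'.le
    · have hlt : Real.logb 2 ρ / μ ≤ 1 := by
        rw [div_le_one hμ', Real.logb_le_iff_le_rpow one_lt_two (by linarith), Real.rpow_natCast]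
        exact (hρ.2 hnear).le
      rw [max_eq_right hρ1.le, min_eq_right hlt, max_eq_right]
      exact div_nonneg (Real.logb_nonneg one_lt_two hρ1.le) hμ'.le
  · have hρμ : 2 ^ μ ≤ ρ := not_lt.1 (mt hρ.1 hnear)
    rw [max_eq_right ((one_le_pow₀ one_le_two).trans hρμ), eq_comm, min_eq_left]
    have hρ0 : 0 < ρ := lt_of_lt_of_le (by positivity) hρμ
    rwa [le_div_iff₀ hμ', one_mul, Real.le_logb_iff_rpow_le one_lt_two hρ0, Real.rpow_natCast]

lemma setDist_le_infDist {α : Type*} [PseudoMetricSpace α] {A B : Set α} {x : α} (hx : x ∈ A) :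
    setDist A B ≤ infDist x B := by
  rcases B.eq_empty_or_nonempty with rfl | hB
  · simp [setDist]
  rw [infDist_eq_iInf]
  have := hB.to_subtype
  refine le_ciInf fun p => csInf_le ⟨0, ?_⟩ (Set.mem_image2_of_mem hx p.2)
  rintro _ ⟨u, -, v, -, rfl⟩
  exact dist_nonneg

lemma infDist_le_two_mul_infDist_of_diam_le_setDist {α : Type*} [PseudoMetricSpace α]
    {A B : Set α} (hA : Bornology.IsBounded A) (hAB : diam A ≤ setDist A B) {x y : α}
    (hx : x ∈ A) (hy : y ∈ A) : infDist x B ≤ 2 * infDist y B := by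
  have := infDist_le_infDist_add_dist (s := B) (x := x) (y := y)
  linarith [dist_le_diam_of_mem hA hx hy, setDist_le_infDist (B := B) hy]

lemma dist_le_sqrt_mul_of_mem_cube {n : ℕ} {b : EuclideanSpace ℝ (Fin n)} {ℓ : ℝ} (hℓ : 0 ≤ ℓ)
    {x y : EuclideanSpace ℝ (Fin n)} (hx : x ∈ cube b ℓ) (hy : y ∈ cube b ℓ) :
    dist x y ≤ Real.sqrt n * ℓ := by
  have hcoord : ∀ i, dist (x i) (y i) ^ 2 ≤ ℓ ^ 2 := fun i => by
    have hxy : |x i - y i| ≤ ℓ := by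
      rw [abs_sub_le_iff]; constructor <;> linarith [hx i, hy i]
    rw [Real.dist_eq]
    exact pow_le_pow_left₀ (abs_nonneg _) hxy 2
  calc dist x y = Real.sqrt (∑ i, dist (x i) (y i) ^ 2) := EuclideanSpace.dist_eq x y
    _ ≤ Real.sqrt (n * ℓ ^ 2) := by
        gcongr
        simpa using Finset.sum_le_sum fun i (_ : i ∈ Finset.univ) => hcoord i
    _ = Real.sqrt n * ℓ := by rw [Real.sqrt_mul (Nat.cast_nonneg n), Real.sqrt_sq hℓ]

lemma isBounded_cube {n : ℕ} (b : EuclideanSpace ℝ (Fin n)) {ℓ : ℝ} (hℓ : 0 ≤ ℓ) :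
    Bornology.IsBounded (cube b ℓ) :=
  isBounded_iff.2 ⟨_, fun _ hx _ hy => dist_le_sqrt_mul_of_mem_cube hℓ hx hy⟩

lemma oscQ_le_of_forall_abs_sub_le {n : ℕ} {f : EuclideanSpace ℝ (Fin n) → ℝ}
    {Q : Set (EuclideanSpace ℝ (Fin n))} (hQ : volume Q < ⊤) {M : ℝ} (hM : 0 ≤ M)
    (hf : ∀ x ∈ Q, ∀ y ∈ Q, |f x - f y| ≤ M) : oscQ f Q ≤ M := by
  set V := (volume Q).toReal
  have hinner : ∀ x ∈ Q, ‖∫ y in Q, |f x - f y|‖ ≤ M * V := fun x hx =>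
    norm_setIntegral_le_of_norm_le_const hQ fun y hy => by
      rw [Real.norm_eq_abs, abs_abs]; exact hf x hx y hy
  have hI : ∫ x in Q, ∫ y in Q, |f x - f y| ≤ V ^ 2 * M := by
    calc ∫ x in Q, ∫ y in Q, |f x - f y| ≤ ‖∫ x in Q, ∫ y in Q, |f x - f y|‖ := le_abs_self _
      _ ≤ M * V * V := norm_setIntegral_le_of_norm_le_const hQ hinner
      _ = V ^ 2 * M := by ring
  unfold oscQ
  rcases eq_or_lt_of_le (ENNReal.toReal_nonneg : 0 ≤ V) with hV | hV
  · rw [← hV]; simpa using hM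
  · calc (V ^ 2)⁻¹ * ∫ x in Q, ∫ y in Q, |f x - f y| ≤ (V ^ 2)⁻¹ * (V ^ 2 * M) := by gcongr
      _ = M := inv_mul_cancel_left₀ (pow_ne_zero 2 hV.ne') M

lemma abs_bumpS_sub_le_of_mem_interior_cube {n : ℕ} (a b : EuclideanSpace ℝ (Fin n)) {ℓ ℓQ : ℝ}
    (hℓ : 0 < ℓ) (hℓQ : 0 ≤ ℓQ) {μ : ℕ} (hμ : 1 ≤ μ)
    (hQ : diam (cube b ℓQ) ≤ setDist (cube b ℓQ) (frontier (cube a ℓ)))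
    {x y : EuclideanSpace ℝ (Fin n)} (hx : x ∈ cube b ℓQ) (hy : y ∈ cube b ℓQ) :
    |bumpS a ℓ μ x - bumpS a ℓ μ y| ≤
      1 / μ * min 1 (4 * Real.sqrt n / Real.log 2 * (2 ^ μ * ℓQ / ℓ)) := by
  set F := frontier (cube a ℓ)
  have hc : (0 : ℝ) < 2 ^ (μ + 2) / ℓ := by positivity
  have hscale : ∀ z, 2 ^ (μ + 2) * infDist z F / ℓ = 2 ^ (μ + 2) / ℓ * infDist z F := fun z => by
    ring
  have hratio : ∀ {u v}, u ∈ cube b ℓQ → v ∈ cube b ℓQ →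
      2 ^ (μ + 2) / ℓ * infDist u F ≤ 2 * (2 ^ (μ + 2) / ℓ * infDist v F) := fun hu hv => by
    rw [mul_left_comm]
    exact mul_le_mul_of_nonneg_left
      (infDist_le_two_mul_infDist_of_diam_le_setDist (isBounded_cube b hℓQ) hQ hu hv) hc.le
  have hdist : |infDist x F - infDist y F| ≤ Real.sqrt n * ℓQ := by
    refine (abs_sub_le_iff.2 ⟨?_, ?_⟩).trans (dist_le_sqrt_mul_of_mem_cube hℓQ hx hy)
    · linarith [infDist_le_infDist_add_dist (s := F) (x := x) (y := y)]
    · linarith [infDist_le_infDist_add_dist (s := F) (x := y) (y := x), dist_comm x y]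
  rw [bumpS_eq_bumpProfile a hℓ hμ, bumpS_eq_bumpProfile a hℓ hμ, hscale, hscale]
  refine (abs_bumpProfile_sub_le μ (hratio hx hy) (hratio hy hx)).trans ?_
  gcongr
  calc |2 ^ (μ + 2) / ℓ * infDist x F - 2 ^ (μ + 2) / ℓ * infDist y F| / Real.log 2
      = 2 ^ (μ + 2) / ℓ * |infDist x F - infDist y F| / Real.log 2 := by
        rw [← mul_sub, abs_mul, abs_of_pos hc]
    _ ≤ 2 ^ (μ + 2) / ℓ * (Real.sqrt n * ℓQ) / Real.log 2 := by gcongr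
    _ = 4 * Real.sqrt n / Real.log 2 * (2 ^ μ * ℓQ / ℓ) := by ring

lemma isModulus_min_one_mul {K : ℝ} (hK : 0 ≤ K) : IsModulus fun s => min 1 (K * s) := by
  refine ⟨fun s hs => le_min zero_le_one (by positivity), ?_, ⟨1, ?_⟩, by simp, ?_⟩
  · exact fun s _ u _ hsu => min_le_min le_rfl (mul_le_mul_of_nonneg_left hsu hK)
  · rintro _ ⟨s, -, rfl⟩
    exact min_le_left _ _
  · exact (continuous_const.min (continuous_const.mul continuous_id)).continuousWithinAt

lemma omegaMod_bumpS_le {n : ℕ} (a : EuclideanSpace ℝ (Fin n)) {ℓ : ℝ} (hℓ : 0 < ℓ) {μ : ℕ}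
    (hμ : 1 ≤ μ) {t : ℝ} (ht : 0 < t) :
    omegaMod (bumpS a ℓ μ) (cube a ℓ) t ≤
      1 / μ * min 1 (4 * Real.sqrt n / Real.log 2 * (2 ^ μ * t / ℓ)) := by
  have hbound : ∀ s, 0 ≤ s → 0 ≤ 1 / (μ : ℝ) * min 1 (4 * Real.sqrt n / Real.log 2 * s) :=
    fun s hs => mul_nonneg (by positivity) (le_min zero_le_one (by positivity))
  refine Real.sSup_le ?_ (hbound _ (by positivity))
  rintro _ ⟨b, ℓQ, hℓQ, -, hQ, hℓQt, rfl⟩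
  refine (oscQ_le_of_forall_abs_sub_le (isBounded_cube b hℓQ.le).measure_lt_top
    (hbound _ (by positivity)) fun x hx y hy =>
      abs_bumpS_sub_le_of_mem_interior_cube a b hℓ hℓQ.le hμ hQ hx hy).trans ?_
  gcongr

theorem bump_modulus_of_mean_oscillation_general (n : ℕ) :
    (∃ θ : ℝ → ℝ, IsModulus θ ∧
      ∀ (a : EuclideanSpace ℝ (Fin n)) (ℓ : ℝ), 0 < ℓ → ∀ μ : ℕ, 1 ≤ μ → ∀ t : ℝ, 0 < t →
        omegaMod (bumpS a ℓ μ) (cube a ℓ) t ≤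
          (1 / (μ : ℝ)) * θ ((2 : ℝ) ^ (μ : ℕ) * t / ℓ)) ∧
    ∃ C > (0 : ℝ), ∀ (a : EuclideanSpace ℝ (Fin n)) (ℓ : ℝ), 0 < ℓ →
      ∀ μ : ℕ, 1 ≤ μ → ∀ t : ℝ, 0 < t →
        omegaMod (bumpS a ℓ μ) (cube a ℓ) t ≤ C / (μ : ℝ) := by
  refine ⟨⟨_, isModulus_min_one_mul (by positivity), fun a ℓ hℓ μ hμ t ht =>
    omegaMod_bumpS_le a hℓ hμ ht⟩, 1, one_pos, fun a ℓ hℓ μ hμ t ht => ?_⟩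
  calc omegaMod (bumpS a ℓ μ) (cube a ℓ) t
      ≤ 1 / μ * min 1 (4 * Real.sqrt n / Real.log 2 * (2 ^ μ * t / ℓ)) :=
        omegaMod_bumpS_le a hℓ hμ ht
    _ ≤ 1 / μ * 1 := by gcongr; exact min_le_left _ _
    _ = 1 / μ := mul_one _

/-- there is a modulus of continuity `θ` (independent of the cube `S` and of
`μ`) with `ω_S(ψ^μ_S, t) ≤ (1/μ)·θ(2^μ t/ℓ(S))` for all `t > 0`; in particular there is
`C > 0` with `‖ψ^μ_S‖_{BMO(S)} ≤ C/μ`. -/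
theorem bump_modulus_of_mean_oscillation (n : ℕ) (hn : 0 < n) :
    (∃ θ : ℝ → ℝ, IsModulus θ ∧
      ∀ (a : EuclideanSpace ℝ (Fin n)) (ℓ : ℝ), 0 < ℓ → ∀ μ : ℕ, 1 ≤ μ → ∀ t : ℝ, 0 < t →
        omegaMod (bumpS a ℓ μ) (cube a ℓ) t ≤
          (1 / (μ : ℝ)) * θ ((2 : ℝ) ^ (μ : ℕ) * t / ℓ)) ∧
    ∃ C > (0 : ℝ), ∀ (a : EuclideanSpace ℝ (Fin n)) (ℓ : ℝ), 0 < ℓ →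
      ∀ μ : ℕ, 1 ≤ μ → ∀ t : ℝ, 0 < t →
        omegaMod (bumpS a ℓ μ) (cube a ℓ) t ≤ C / (μ : ℝ) :=
  bump_modulus_of_mean_oscillation_general n
end

section
/- Product of shifted moduli is a modulus: let η₁, η₂ be moduli of continuity, and suppose for each index i we have μᵢ ≥ 1 and ℓᵢ > 0 satisfying μᵢ ≥ C₁ log₂(L/ℓᵢ) − C₂ for constants C₁ > 0, C₂ ∈ R and L = sup ℓᵢ < ∞. Then there exists a modulus of continuity η₃ with sup η₃ ≤ (sup η₁)(sup η₂) such that for all i and all t > 0, η₁(1/μᵢ)·η₂(2^{μᵢ} t/ℓᵢ) ≤ η₃(t). -/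
/-- Product of shifted moduli is a modulus: if `η₁, η₂` are moduli of
continuity and for each index `i` we have `μᵢ ≥ 1`, `0 < ℓᵢ ≤ L` with
`μᵢ ≥ C₁ log₂(L/ℓᵢ) − C₂`, then there is a modulus of continuity `η₃` with
`sup η₃ ≤ (sup η₁)(sup η₂)` such that `η₁(1/μᵢ)·η₂(2^{μᵢ} t/ℓᵢ) ≤ η₃(t)` for all `i`
and all `t > 0`. -/
theorem product_of_shifted_moduli (η₁ η₂ : ℝ → ℝ)
    (h₁ : IsModulus η₁) (h₂ : IsModulus η₂)
    (ι : Type*) (μ ℓ : ι → ℝ) (C₁ C₂ L : ℝ) (hC₁ : 0 < C₁) (hL : 0 < L)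
    (hμ : ∀ i, 1 ≤ μ i) (hℓ : ∀ i, 0 < ℓ i ∧ ℓ i ≤ L)
    (hlow : ∀ i, C₁ * Real.logb 2 (L / ℓ i) - C₂ ≤ μ i) :
    ∃ η₃ : ℝ → ℝ, IsModulus η₃ ∧
      sSup (η₃ '' Set.Ici 0) ≤ sSup (η₁ '' Set.Ici 0) * sSup (η₂ '' Set.Ici 0) ∧
      ∀ i, ∀ t : ℝ, 0 < t →
        η₁ (1 / μ i) * η₂ ((2 : ℝ) ^ (μ i) * t / ℓ i) ≤ η₃ t := by
  obtain ⟨h₁pos, h₁mono, h₁bdd, h₁zero, h₁cont⟩ := h₁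
  obtain ⟨h₂pos, h₂mono, h₂bdd, h₂zero, h₂cont⟩ := h₂
  set M₁ := sSup (η₁ '' Set.Ici 0) with hM₁def
  set M₂ := sSup (η₂ '' Set.Ici 0) with hM₂def
  have hle₁ : ∀ u : ℝ, 0 ≤ u → η₁ u ≤ M₁ := fun u hu =>
    le_csSup h₁bdd ⟨u, hu, rfl⟩
  have hle₂ : ∀ u : ℝ, 0 ≤ u → η₂ u ≤ M₂ := fun u hu =>
    le_csSup h₂bdd ⟨u, hu, rfl⟩
  have hM₁ : 0 ≤ M₁ := h₁zero ▸ hle₁ 0 le_rfl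
  have hM₂ : 0 ≤ M₂ := h₂zero ▸ hle₂ 0 le_rfl
  set c : ℝ := 1 + 1 / C₁ with hcdef
  have hc : 0 < c := by positivity
  set CL : ℝ := (2 : ℝ) ^ (C₂ / C₁) / L with hCLdef
  have hCL : 0 < CL := by
    apply div_pos (Real.rpow_pos_of_pos two_pos _) hL
  set m : ℝ → ℝ := fun t => Real.logb 2 (1 / (CL * Real.sqrt t)) / c with hmdef
  set u : ℝ → ℝ := fun t => 1 / max 1 (m t) with hudef
  have hmaxpos : ∀ t : ℝ, (0 : ℝ) < max 1 (m t) := fun t =>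
    lt_of_lt_of_le one_pos (le_max_left _ _)
  have hupos : ∀ t : ℝ, 0 < u t := fun t => one_div_pos.mpr (hmaxpos t)
  set η₃ : ℝ → ℝ := fun t =>
    if t ≤ 0 then 0 else max (M₁ * η₂ (Real.sqrt t)) (M₂ * η₁ (u t)) with hη₃def
  -- nonnegativity
  have hη₃nonneg : ∀ t : ℝ, 0 ≤ η₃ t := by
    intro t
    simp only [hη₃def]
    split
    · exact le_rfl
    · exact le_trans (mul_nonneg hM₁ (h₂pos _ (Real.sqrt_nonneg t))) (le_max_left _ _)
  have hη₃zero : η₃ 0 = 0 := by simp [hη₃def]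
  -- boundedness by M₁ * M₂
  have hbound : ∀ t : ℝ, η₃ t ≤ M₁ * M₂ := by
    intro t
    simp only [hη₃def]
    split
    · exact mul_nonneg hM₁ hM₂
    · apply max_le
      · exact mul_le_mul_of_nonneg_left (hle₂ _ (Real.sqrt_nonneg t)) hM₁
      · rw [mul_comm M₁ M₂]
        exact mul_le_mul_of_nonneg_left (hle₁ _ (hupos t).le) hM₂
  -- m is antitone on positive reals
  have hmanti : ∀ s t : ℝ, 0 < s → s ≤ t → m t ≤ m s := by
    intro s t hs hst
    have h1 : 0 < Real.sqrt s := Real.sqrt_pos.mpr hs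
    have h2 : 0 < Real.sqrt t := Real.sqrt_pos.mpr (lt_of_lt_of_le hs hst)
    have h3 : CL * Real.sqrt s ≤ CL * Real.sqrt t :=
      mul_le_mul_of_nonneg_left (Real.sqrt_le_sqrt hst) hCL.le
    have h4 : 1 / (CL * Real.sqrt t) ≤ 1 / (CL * Real.sqrt s) :=
      one_div_le_one_div_of_le (mul_pos hCL h1) h3
    have h5 : Real.logb 2 (1 / (CL * Real.sqrt t)) ≤ Real.logb 2 (1 / (CL * Real.sqrt s)) :=
      (Real.logb_le_logb one_lt_two (one_div_pos.mpr (mul_pos hCL h2))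
        (one_div_pos.mpr (mul_pos hCL h1))).mpr h4
    exact div_le_div_of_nonneg_right h5 hc.le
  -- monotonicity of η₃
  have hη₃mono : MonotoneOn η₃ (Set.Ici 0) := by
    intro s hs t ht hst
    by_cases hs0 : s ≤ 0
    · have : η₃ s = 0 := by simp [hη₃def, hs0]
      rw [this]; exact hη₃nonneg t
    · push_neg at hs0
      have ht0 : ¬ t ≤ 0 := not_le.mpr (lt_of_lt_of_le hs0 hst)
      simp only [hη₃def, if_neg (not_le.mpr hs0), if_neg ht0]
      apply max_le_max
      · exact mul_le_mul_of_nonneg_left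
          (h₂mono (Real.sqrt_nonneg s) (Real.sqrt_nonneg t) (Real.sqrt_le_sqrt hst)) hM₁
      · have hmax : max 1 (m t) ≤ max 1 (m s) :=
          max_le_max le_rfl (hmanti s t hs0 hst)
        have husut : u s ≤ u t := one_div_le_one_div_of_le (hmaxpos t) hmax
        exact mul_le_mul_of_nonneg_left
          (h₁mono (hupos s).le (hupos t).le husut) hM₂
  -- continuity within Ici 0 at 0
  have hη₃cont : ContinuousWithinAt η₃ (Set.Ici 0) 0 := by
    rw [Metric.continuousWithinAt_iff]
    intro ε hε
    rw [Metric.continuousWithinAt_iff] at h₁cont h₂cont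
    obtain ⟨δ₁, hδ₁, hd1⟩ := h₁cont (ε / (M₂ + 1)) (by positivity)
    obtain ⟨δ₂, hδ₂, hd2⟩ := h₂cont (ε / (M₁ + 1)) (by positivity)
    set K : ℝ := max 1 (2 / δ₁) with hKdef
    have hK1 : (1 : ℝ) ≤ K := le_max_left _ _
    have hKpos : (0 : ℝ) < K := lt_of_lt_of_le one_pos hK1
    set t₀ : ℝ := (1 / (CL * (2 : ℝ) ^ (c * K))) ^ 2 with ht₀def
    have ht₀pos : 0 < t₀ := by positivity
    refine ⟨min (δ₂ ^ 2) t₀, lt_min (by positivity) ht₀pos, ?_⟩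
    intro x hx hxd
    rw [hη₃zero, Real.dist_eq, sub_zero, abs_of_nonneg (hη₃nonneg x)]
    by_cases hx0 : x ≤ 0
    · simpa [hη₃def, hx0] using hε
    · push_neg at hx0
      have hxabs : x < min (δ₂ ^ 2) t₀ := by
        rwa [Real.dist_eq, sub_zero, abs_of_nonneg hx0.le] at hxd
      simp only [hη₃def, if_neg (not_le.mpr hx0)]
      apply max_lt
      · -- first term
        have hsx : Real.sqrt x < δ₂ := by
          have := Real.sqrt_lt_sqrt hx0.le (lt_of_lt_of_le hxabs (min_le_left _ _))
          rwa [Real.sqrt_sq hδ₂.le] at this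
        have h2x : η₂ (Real.sqrt x) < ε / (M₁ + 1) := by
          have := hd2 (Real.sqrt_nonneg x)
            (by rwa [Real.dist_eq, sub_zero, abs_of_nonneg (Real.sqrt_nonneg x)])
          rwa [h₂zero, Real.dist_eq, sub_zero,
            abs_of_nonneg (h₂pos _ (Real.sqrt_nonneg x))] at this
        calc M₁ * η₂ (Real.sqrt x) ≤ M₁ * (ε / (M₁ + 1)) :=
              mul_le_mul_of_nonneg_left h2x.le hM₁
          _ < ε := by
              rw [mul_div_assoc'] ; rw [div_lt_iff₀ (by positivity)]
              nlinarith
      · -- second term: show m x ≥ K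
        have hxt₀ : x < t₀ := lt_of_lt_of_le hxabs (min_le_right _ _)
        have hsx : Real.sqrt x < 1 / (CL * (2 : ℝ) ^ (c * K)) := by
          have := Real.sqrt_lt_sqrt hx0.le hxt₀
          rwa [ht₀def, Real.sqrt_sq (by positivity)] at this
        have hsx0 : 0 < Real.sqrt x := Real.sqrt_pos.mpr hx0
        have hprod : CL * Real.sqrt x < 1 / (2 : ℝ) ^ (c * K) := by
          have := mul_lt_mul_of_pos_left hsx hCL
          calc CL * Real.sqrt x < CL * (1 / (CL * (2 : ℝ) ^ (c * K))) := this
            _ = 1 / (2 : ℝ) ^ (c * K) := by field_simp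
        have hinv : (2 : ℝ) ^ (c * K) ≤ 1 / (CL * Real.sqrt x) := by
          rw [le_div_iff₀ (mul_pos hCL hsx0)]
          rw [lt_div_iff₀ (by positivity)] at hprod
          linarith [hprod]
        have hlog : c * K ≤ Real.logb 2 (1 / (CL * Real.sqrt x)) := by
          have := (Real.logb_le_logb one_lt_two (by positivity)
            (one_div_pos.mpr (mul_pos hCL hsx0))).mpr hinv
          rwa [Real.logb_rpow two_pos (by norm_num)] at this
        have hmK : K ≤ m x := by
          rw [hmdef]
          rw [le_div_iff₀ hc]
          linarith [hlog]
        have hmax : max 1 (m x) = m x := max_eq_right (le_trans hK1 hmK)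
        have hux : u x < δ₁ := by
          have h2d : 2 / δ₁ ≤ m x := le_trans (le_max_right 1 (2/δ₁)) hmK
          have hmxpos : 0 < m x := lt_of_lt_of_le hKpos hmK
          rw [hudef]
          simp only [hmax]
          calc 1 / m x ≤ 1 / (2 / δ₁) := one_div_le_one_div_of_le (by positivity) h2d
            _ = δ₁ / 2 := one_div_div 2 δ₁
            _ < δ₁ := by linarith
        have h1x : η₁ (u x) < ε / (M₂ + 1) := by
          have := hd1 (hupos x).le
            (by rwa [Real.dist_eq, sub_zero, abs_of_nonneg (hupos x).le])
          rwa [h₁zero, Real.dist_eq, sub_zero,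
            abs_of_nonneg (h₁pos _ (hupos x).le)] at this
        calc M₂ * η₁ (u x) ≤ M₂ * (ε / (M₂ + 1)) :=
              mul_le_mul_of_nonneg_left h1x.le hM₂
          _ < ε := by
              rw [mul_div_assoc'] ; rw [div_lt_iff₀ (by positivity)]
              nlinarith
  refine ⟨η₃, ⟨fun t _ => hη₃nonneg t, hη₃mono, ⟨M₁ * M₂, ?_⟩, hη₃zero, hη₃cont⟩, ?_, ?_⟩
  · rintro y ⟨x, -, rfl⟩; exact hbound x
  · apply csSup_le ⟨η₃ 0, Set.mem_image_of_mem _ Set.self_mem_Ici⟩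
    rintro y ⟨x, -, rfl⟩; exact hbound x
  · -- main inequality
    intro i t ht
    obtain ⟨hℓi, hℓiL⟩ := hℓ i
    have hμi := hμ i
    have hμipos : (0 : ℝ) < μ i := lt_of_lt_of_le one_pos hμi
    have harg : (0 : ℝ) ≤ (2 : ℝ) ^ (μ i) * t / ℓ i := by positivity
    have hst : 0 < Real.sqrt t := Real.sqrt_pos.mpr ht
    have hη₃t : η₃ t = max (M₁ * η₂ (Real.sqrt t)) (M₂ * η₁ (u t)) := by
      simp [hη₃def, not_le.mpr ht]
    rw [hη₃t]
    by_cases hcase : (2 : ℝ) ^ (μ i) / ℓ i ≤ 1 / Real.sqrt t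
    · -- case A
      have hargle : (2 : ℝ) ^ (μ i) * t / ℓ i ≤ Real.sqrt t := by
        have : (2 : ℝ) ^ (μ i) * t / ℓ i = ((2 : ℝ) ^ (μ i) / ℓ i) * t := by ring
        rw [this]
        calc ((2 : ℝ) ^ (μ i) / ℓ i) * t ≤ (1 / Real.sqrt t) * t :=
              mul_le_mul_of_nonneg_right hcase ht.le
          _ = t / Real.sqrt t := by ring
          _ = Real.sqrt t := Real.div_sqrt
      have h2 : η₂ ((2 : ℝ) ^ (μ i) * t / ℓ i) ≤ η₂ (Real.sqrt t) :=
        h₂mono harg (Real.sqrt_nonneg t) hargle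
      have h1 : η₁ (1 / μ i) ≤ M₁ := hle₁ _ (by positivity)
      refine le_trans ?_ (le_max_left _ _)
      exact mul_le_mul h1 h2 (h₂pos _ harg) hM₁
    · -- case B
      push_neg at hcase
      have hkey : (2 : ℝ) ^ (μ i) / ℓ i ≤ CL * (2 : ℝ) ^ (c * μ i) := by
        have hlb : Real.logb 2 (L / ℓ i) ≤ (μ i + C₂) / C₁ := by
          rw [le_div_iff₀ hC₁] ; have := hlow i ; linarith
        have hLl : L / ℓ i ≤ (2 : ℝ) ^ ((μ i + C₂) / C₁) :=
          (Real.logb_le_iff_le_rpow one_lt_two (div_pos hL hℓi)).mp hlb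
        have h1 : (1 : ℝ) / ℓ i ≤ (2 : ℝ) ^ ((μ i + C₂) / C₁) / L := by
          rw [div_le_div_iff₀ hℓi hL]
          calc 1 * L = L / ℓ i * ℓ i := by field_simp
            _ ≤ (2 : ℝ) ^ ((μ i + C₂) / C₁) * ℓ i :=
              mul_le_mul_of_nonneg_right hLl hℓi.le
        calc (2 : ℝ) ^ (μ i) / ℓ i = (2 : ℝ) ^ (μ i) * (1 / ℓ i) := by ring
          _ ≤ (2 : ℝ) ^ (μ i) * ((2 : ℝ) ^ ((μ i + C₂) / C₁) / L) :=
            mul_le_mul_of_nonneg_left h1 (by positivity)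
          _ = CL * (2 : ℝ) ^ (c * μ i) := by
            rw [hCLdef, hcdef]
            have e1 : (μ i + C₂) / C₁ = μ i / C₁ + C₂ / C₁ := add_div _ _ _
            have e2 : (1 + 1 / C₁) * μ i = μ i + μ i / C₁ := by ring
            rw [e1, e2, Real.rpow_add two_pos, Real.rpow_add two_pos]
            ring
      -- derive m t ≤ μ i
      have hchain : 1 / Real.sqrt t < CL * (2 : ℝ) ^ (c * μ i) := lt_of_lt_of_le hcase hkey
      have hinv : 1 / (CL * Real.sqrt t) ≤ (2 : ℝ) ^ (c * μ i) := by
        rw [div_le_iff₀ (mul_pos hCL hst)]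
        rw [div_lt_iff₀ hst] at hchain
        nlinarith [hchain, hst, hCL]
      have hlog : Real.logb 2 (1 / (CL * Real.sqrt t)) ≤ c * μ i := by
        have := (Real.logb_le_logb one_lt_two (one_div_pos.mpr (mul_pos hCL hst))
          (by positivity)).mpr hinv
        rwa [Real.logb_rpow two_pos (by norm_num)] at this
      have hmle : m t ≤ μ i := by
        rw [hmdef]
        rw [div_le_iff₀ hc]
        calc Real.logb 2 (1 / (CL * Real.sqrt t)) ≤ c * μ i := hlog
          _ = μ i * c := by ring
      have hmaxle : max 1 (m t) ≤ μ i := max_le hμi hmle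
      have huge : 1 / μ i ≤ u t := one_div_le_one_div_of_le (hmaxpos t) hmaxle
      have h1 : η₁ (1 / μ i) ≤ η₁ (u t) := h₁mono (show (0:ℝ) ≤ 1 / μ i by positivity) (hupos t).le huge
      have h2 : η₂ ((2 : ℝ) ^ (μ i) * t / ℓ i) ≤ M₂ := hle₂ _ harg
      refine le_trans ?_ (le_max_right _ _)
      calc η₁ (1 / μ i) * η₂ ((2 : ℝ) ^ (μ i) * t / ℓ i)
          ≤ η₁ (u t) * M₂ := mul_le_mul h1 h2 (h₂pos _ harg) (h₁pos _ (hupos t).le)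
        _ = M₂ * η₁ (u t) := by ring
end
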